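/- Let p ∈ (1,2], δ > 0 and A ≥ 1, and set ω := ω_{p,δ}. Then for all t ≥ 0: ((p−1)/2)·(δ+A)^{p−2}·t² ≤ ω^A(t), and (p−1)·ω(t) ≤ ω^A(t) ≤ (δ^{p−2}/2)·t². -/

import Mathlib

open Real Set MeasureTheory Filter Matrix

noncomputable section

/-- The N-function `omega_{p,delta}(t) = int_0^t (delta+s)^(p-2) s ds`. -/
def omg (p δ : ℝ) (t : ℝ) : ℝ := ∫ s in (0:ℝ)..t, (δ + s) ^ (p - 2) * s

/-- The `A`-approximation of a function `φ`: it equals `φ` on `[0,A]` and is the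
second-order Taylor polynomial of `φ` at `A` for `t > A`. -/
def approxA (φ : ℝ → ℝ) (A : ℝ) (t : ℝ) : ℝ :=
  if t ≤ A then φ t
  else (1/2) * deriv (deriv φ) A * t ^ 2 + (deriv φ A - deriv (deriv φ) A * A) * t
    + (φ A - deriv φ A * A + (1/2) * deriv (deriv φ) A * A ^ 2)

/-- `φ` is a regular N-function: continuous, convex, positive for `t > 0`,
`φ(t)/t → 0` as `t → 0⁺`, `φ(t)/t → ∞` as `t → ∞`, `C¹` on `[0,∞)`, `C²` on `(0,∞)`,
with `φ'' > 0` on `(0,∞)`. -/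
structure IsRegularNFunction (φ : ℝ → ℝ) : Prop where
  continuousOn : ContinuousOn φ (Set.Ici 0)
  convexOn : ConvexOn ℝ (Set.Ici 0) φ
  pos : ∀ t : ℝ, 0 < t → 0 < φ t
  tendsto_zero : Filter.Tendsto (fun t => φ t / t) (nhdsWithin 0 (Set.Ioi 0)) (nhds 0)
  tendsto_atTop : Filter.Tendsto (fun t => φ t / t) Filter.atTop Filter.atTop
  diffAt : ∀ t : ℝ, 0 < t → DifferentiableAt ℝ φ t
  deriv_continuousOn : ContinuousOn (deriv φ) (Set.Ici 0)
  diffAt2 : ∀ t : ℝ, 0 < t → DifferentiableAt ℝ (deriv φ) t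
  deriv2_continuousOn : ContinuousOn (deriv (deriv φ)) (Set.Ioi 0)
  deriv2_pos : ∀ t : ℝ, 0 < t → 0 < deriv (deriv φ) t

/-- `φ` is a balanced N-function with characteristics `(γ₁, γ₂)`:
`γ₁ φ'(t) ≤ t φ''(t) ≤ γ₂ φ'(t)` for all `t > 0`. -/
structure IsBalanced (φ : ℝ → ℝ) (γ₁ γ₂ : ℝ) : Prop where
  regular : IsRegularNFunction φ
  gamma1_mem : γ₁ ∈ Set.Ioc (0:ℝ) 1
  gamma2_ge : 1 ≤ γ₂
  lower : ∀ t : ℝ, 0 < t → γ₁ * deriv φ t ≤ t * deriv (deriv φ) t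
  upper : ∀ t : ℝ, 0 < t → t * deriv (deriv φ) t ≤ γ₂ * deriv φ t

/-- `ψ` satisfies the Δ₂-condition with constant `K`. -/
def SatisfiesDelta2 (ψ : ℝ → ℝ) (K : ℝ) : Prop :=
  2 ≤ K ∧ ∀ t : ℝ, 0 ≤ t → ψ (2 * t) ≤ K * ψ t

/-- The complementary N-function `φ*(t) = ∫₀ᵗ (φ')⁻¹(s) ds`, where `(φ')⁻¹` is the
inverse on `[0,∞)` of the (strictly increasing) derivative `φ'`. -/
def conj (φ : ℝ → ℝ) (t : ℝ) : ℝ :=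
  ∫ s in (0:ℝ)..t, Function.invFunOn (deriv φ) (Set.Ici 0) s

/-! For `p ≤ 2` the weight `(δ + s) ^ (p - 2)` in `ω' (s) = (δ + s) ^ (p - 2) * s` is antitone on
`[0, ∞)`. Hence `ω (b) - ω (a)` lies between the weight at `b` and at `a` times `(b² - a²) / 2`, and
`(p - 1) (δ + A) ^ (p - 2) ≤ ω'' (A) ≤ (δ + A) ^ (p - 2)`. For `t > A` the approximation is the
Taylor polynomial `ω (A) + ω' (A) (t - A) + ω'' (A) (t - A)² / 2`, and inserting these bounds term by
term gives all three inequalities. -/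

theorem approxA_of_le {φ : ℝ → ℝ} {A t : ℝ} (h : t ≤ A) : approxA φ A t = φ t :=
  if_pos h

theorem approxA_of_lt {φ : ℝ → ℝ} {A t : ℝ} (h : A < t) :
    approxA φ A t = φ A + deriv φ A * (t - A) + deriv (deriv φ) A / 2 * (t - A) ^ 2 := by
  rw [approxA, if_neg h.not_ge]
  ring

section omg

variable {p δ : ℝ}

theorem continuousOn_omg_integrand :
    ContinuousOn (fun s : ℝ => (δ + s) ^ (p - 2) * s) (Ioi (-δ)) := by
  refine (ContinuousOn.rpow_const (by fun_prop) fun s hs => Or.inl ?_).mul continuousOn_id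
  exact (neg_lt_iff_pos_add'.mp hs).ne'

theorem intervalIntegrable_omg_integrand {a b : ℝ} (ha : -δ < a) (hb : -δ < b) :
    IntervalIntegrable (fun s : ℝ => (δ + s) ^ (p - 2) * s) volume a b :=
  (continuousOn_omg_integrand.mono fun _ hx => (lt_inf_iff.mpr ⟨ha, hb⟩).trans_le hx.1)
    |>.intervalIntegrable

theorem hasDerivAt_omg (hδ : 0 < δ) {t : ℝ} (ht : -δ < t) :
    HasDerivAt (omg p δ) ((δ + t) ^ (p - 2) * t) t :=
  intervalIntegral.integral_hasDerivAt_right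
    (intervalIntegrable_omg_integrand (neg_lt_zero.mpr hδ) ht)
    (continuousOn_omg_integrand.stronglyMeasurableAtFilter isOpen_Ioi t ht)
    (continuousOn_omg_integrand.continuousAt (isOpen_Ioi.mem_nhds ht))

theorem deriv_omg (hδ : 0 < δ) {t : ℝ} (ht : -δ < t) :
    deriv (omg p δ) t = (δ + t) ^ (p - 2) * t :=
  (hasDerivAt_omg hδ ht).deriv

theorem deriv_deriv_omg (hδ : 0 < δ) {t : ℝ} (ht : -δ < t) :
    deriv (deriv (omg p δ)) t = (δ + t) ^ (p - 2) + (p - 2) * (δ + t) ^ (p - 3) * t := by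
  have hpos : 0 < δ + t := neg_lt_iff_pos_add'.mp ht
  have hderiv : deriv (omg p δ) =ᶠ[nhds t] fun s => (δ + s) ^ (p - 2) * s :=
    eventually_of_mem (isOpen_Ioi.mem_nhds ht) fun s hs => deriv_omg hδ hs
  have hweight : HasDerivAt (fun s => (δ + s) ^ (p - 2)) ((p - 2) * (δ + t) ^ (p - 3)) t := by
    simpa [show p - 2 - 1 = p - 3 by ring] using
      ((hasDerivAt_id t).const_add δ).rpow_const (p := p - 2) (Or.inl hpos.ne')
  rw [hderiv.deriv_eq]
  exact (hweight.mul (hasDerivAt_id' t)).deriv.trans (by ring)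

theorem omg_sub_mem_Icc (hδ : 0 < δ) (hp : p ≤ 2) {a b : ℝ} (ha : 0 ≤ a) (hab : a ≤ b) :
    omg p δ b - omg p δ a ∈
      Icc ((δ + b) ^ (p - 2) * (b ^ 2 - a ^ 2) / 2) ((δ + a) ^ (p - 2) * (b ^ 2 - a ^ 2) / 2) := by
  have hδ0 : -δ < 0 := neg_lt_zero.mpr hδ
  have hint : ∀ {x}, 0 ≤ x → IntervalIntegrable (fun s : ℝ => (δ + s) ^ (p - 2) * s) volume 0 x :=
    fun hx => intervalIntegrable_omg_integrand hδ0 (hδ0.trans_le hx)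
  have hlin : ∀ c : ℝ, ∫ s in a..b, c * s = c * (b ^ 2 - a ^ 2) / 2 := fun c => by
    rw [intervalIntegral.integral_const_mul, integral_id]
    ring
  have hweight : ∀ s ∈ Icc a b, (δ + b) ^ (p - 2) ≤ (δ + s) ^ (p - 2) ∧
      (δ + s) ^ (p - 2) ≤ (δ + a) ^ (p - 2) := fun s hs =>
    ⟨rpow_le_rpow_of_nonpos (by linarith [hs.1]) (by linarith [hs.2]) (by linarith),
      rpow_le_rpow_of_nonpos (by linarith) (by linarith [hs.1]) (by linarith)⟩
  rw [omg, omg, intervalIntegral.integral_interval_sub_left (hint (ha.trans hab)) (hint ha),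
    ← hlin, ← hlin]
  have hcont : ∀ c : ℝ, IntervalIntegrable (fun s : ℝ => c * s) volume a b := fun c =>
    (continuous_const.mul continuous_id).intervalIntegrable a b
  exact ⟨intervalIntegral.integral_mono_on hab (hcont _)
      (intervalIntegrable_omg_integrand (by linarith) (by linarith))
      fun s hs => mul_le_mul_of_nonneg_right (hweight s hs).1 (ha.trans hs.1),
    intervalIntegral.integral_mono_on hab
      (intervalIntegrable_omg_integrand (by linarith) (by linarith)) (hcont _)
      fun s hs => mul_le_mul_of_nonneg_right (hweight s hs).2 (ha.trans hs.1)⟩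

theorem omg_mem_Icc (hδ : 0 < δ) (hp : p ≤ 2) {t : ℝ} (ht : 0 ≤ t) :
    omg p δ t ∈ Icc ((δ + t) ^ (p - 2) * t ^ 2 / 2) (δ ^ (p - 2) * t ^ 2 / 2) := by
  simpa [omg] using omg_sub_mem_Icc hδ hp le_rfl ht

theorem deriv_deriv_omg_mem_Icc (hδ : 0 < δ) (hp : p ≤ 2) {t : ℝ} (ht : 0 ≤ t) :
    deriv (deriv (omg p δ)) t ∈ Icc ((p - 1) * (δ + t) ^ (p - 2)) ((δ + t) ^ (p - 2)) := by
  have hpos : 0 < δ + t := by linarith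
  have hsplit : (δ + t) ^ (p - 2) = (δ + t) ^ (p - 3) * (δ + t) := by
    rw [← rpow_add_one hpos.ne']
    ring_nf
  have hC : 0 ≤ (δ + t) ^ (p - 3) := (rpow_pos_of_pos hpos _).le
  rw [deriv_deriv_omg hδ (by linarith), mem_Icc]
  constructor
  · nlinarith [mul_nonneg (mul_nonneg (sub_nonneg.mpr hp) hC) hδ.le]
  · nlinarith [mul_nonneg (mul_nonneg (sub_nonneg.mpr hp) hC) ht]

end omg

section approxA_omg

variable {p δ A t : ℝ}

theorem approxA_omg_bounds_of_le (hδ : 0 < δ) (hp : p ≤ 2) (ht : 0 ≤ t) (htA : t ≤ A) :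
    ((p - 1) / 2) * (δ + A) ^ (p - 2) * t ^ 2 ≤ approxA (omg p δ) A t ∧
      (p - 1) * omg p δ t ≤ approxA (omg p δ) A t ∧
      approxA (omg p δ) A t ≤ (δ ^ (p - 2) / 2) * t ^ 2 := by
  rw [approxA_of_le htA]
  obtain ⟨hω_lo, hω_hi⟩ := omg_mem_Icc hδ hp ht
  have hw : (δ + A) ^ (p - 2) ≤ (δ + t) ^ (p - 2) :=
    rpow_le_rpow_of_nonpos (by linarith) (by linarith) (by linarith)
  have hB : 0 ≤ (δ + A) ^ (p - 2) := (rpow_pos_of_pos (by linarith) _).le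
  refine ⟨?_, ?_, by linarith⟩
  · nlinarith [mul_le_mul_of_nonneg_right hw (sq_nonneg t), mul_nonneg hB (sq_nonneg t)]
  · nlinarith [mul_nonneg (hB.trans hw) (sq_nonneg t)]

theorem approxA_omg_bounds_of_lt (hδ : 0 < δ) (hp : p ∈ Ioc 1 2) (hA : 0 ≤ A) (hAt : A < t) :
    ((p - 1) / 2) * (δ + A) ^ (p - 2) * t ^ 2 ≤ approxA (omg p δ) A t ∧
      (p - 1) * omg p δ t ≤ approxA (omg p δ) A t ∧
      approxA (omg p δ) A t ≤ (δ ^ (p - 2) / 2) * t ^ 2 := by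
  obtain ⟨hp1, hp2⟩ := hp
  rw [approxA_of_lt hAt, deriv_omg hδ (by linarith)]
  obtain ⟨hωA_lo, hωA_hi⟩ := omg_mem_Icc hδ hp2 hA
  obtain ⟨-, hωAt⟩ := omg_sub_mem_Icc hδ hp2 hA hAt.le
  obtain ⟨hω''_lo, hω''_hi⟩ := deriv_deriv_omg_mem_Icc hδ hp2 hA
  have hB : 0 ≤ (δ + A) ^ (p - 2) := (rpow_pos_of_pos (by linarith) _).le
  have hBδ : (δ + A) ^ (p - 2) ≤ δ ^ (p - 2) :=
    rpow_le_rpow_of_nonpos hδ (by linarith) (by linarith)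
  have hx : 0 ≤ t - A := by linarith
  have h2p : 0 ≤ (2 - p) * (δ + A) ^ (p - 2) := mul_nonneg (by linarith) hB
  refine ⟨?_, ?_, ?_⟩
  · nlinarith [mul_le_mul_of_nonneg_right hω''_lo (sq_nonneg (t - A)),
      mul_nonneg h2p (mul_nonneg hA hx), mul_nonneg h2p (sq_nonneg A)]
  · nlinarith [mul_le_mul_of_nonneg_right hω''_lo (sq_nonneg (t - A)),
      mul_nonneg h2p (mul_nonneg hA hx),
      mul_nonneg (sub_nonneg.mpr hp2) ((by positivity : (0:ℝ) ≤ _).trans hωA_lo),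
      mul_le_mul_of_nonneg_left hωAt (sub_nonneg.mpr hp1.le)]
  · nlinarith [mul_le_mul_of_nonneg_right (hω''_hi.trans hBδ) (sq_nonneg (t - A)),
      mul_le_mul_of_nonneg_right hBδ (mul_nonneg hA hx)]

end approxA_omg

/-- For `p ∈ (1,2]`, `δ > 0`, `A ≥ 1` and all `t ≥ 0`:
`((p−1)/2)(δ+A)^{p−2} t² ≤ ω^A(t)` and `(p−1) ω(t) ≤ ω^A(t) ≤ (δ^{p−2}/2) t²`. -/
theorem stmt6 (p δ A : ℝ) (hp : p ∈ Set.Ioc (1:ℝ) 2) (hδ : 0 < δ) (hA : 1 ≤ A) :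
    ∀ t : ℝ, 0 ≤ t →
      ((p - 1) / 2) * (δ + A) ^ (p - 2) * t ^ 2 ≤ approxA (omg p δ) A t ∧
      (p - 1) * omg p δ t ≤ approxA (omg p δ) A t ∧
      approxA (omg p δ) A t ≤ (δ ^ (p - 2) / 2) * t ^ 2 := by
  intro t ht
  rcases le_or_gt t A with htA | hAt
  · exact approxA_omg_bounds_of_le hδ hp.2 ht htA
  · exact approxA_omg_bounds_of_lt hδ hp (by linarith) hAt

end
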